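/- arXiv:1901.00172 — 2 statements merged into one kernel-verified Lean document; each statement's English description precedes it below -/
import Mathlib

section
/- The Laplace (double-exponential) distribution is an exponential scale mixture of Gaussians: for λ > 0 and all x ∈ ℝ, ∫₀^∞ (1/√(2πτ))·exp(−x²/(2τ)) · (λ²/2)·exp(−λ²τ/2) dτ = (λ/2)·exp(−λ|x|). -/
open Real MeasureTheory Set

lemma glasser_key (a b : ℝ) (ha : 0 < a) (hb : 0 < b) :
    ∫ u in Ioi (0:ℝ), Real.exp (-(b * u - a / u) ^ 2) = Real.sqrt π / (2 * b) := by
  set g : ℝ → ℝ := fun u => Real.exp (-(b * u - a / u) ^ 2) with hg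
  -- continuity on Ioi 0
  have hcont : ContinuousOn g (Ioi 0) := by
    apply Continuous.comp_continuousOn Real.continuous_exp
    apply ContinuousOn.neg
    apply ContinuousOn.pow
    exact (continuousOn_const.mul continuousOn_id).sub
      (continuousOn_const.div continuousOn_id (fun u hu => ne_of_gt hu))
  -- integrability of g on Ioi 0
  have hint : IntegrableOn g (Ioi 0) := by
    have hdom : IntegrableOn (fun u : ℝ => Real.exp (2 * (a * b)) * Real.exp (-b ^ 2 * u ^ 2))
        (Ioi 0) := by
      exact (integrableOn_Ioi_exp_neg_mul_sq_iff.mpr (by positivity)).const_mul _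
    apply hdom.mono' (hcont.aestronglyMeasurable measurableSet_Ioi)
    rw [ae_restrict_iff' measurableSet_Ioi]
    filter_upwards with u hu
    have hu0 : u ≠ 0 := ne_of_gt hu
    have hx : (b * u - a / u) ^ 2 = b ^ 2 * u ^ 2 - 2 * (a * b) + (a / u) ^ 2 := by
      field_simp; ring
    have h2 : (0:ℝ) ≤ (a / u) ^ 2 := sq_nonneg _
    rw [hg]
    simp only [norm_eq_abs, abs_exp, ← Real.exp_add]
    apply Real.exp_le_exp.2
    nlinarith
  -- the φ substitution: ∫ g = ∫ (a/(b u²)) g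
  have hφimg : (fun u : ℝ => a / (b * u)) '' Ioi 0 = Ioi 0 := by
    apply Subset.antisymm
    · rintro y ⟨u, hu, rfl⟩
      have : (0:ℝ) < u := hu
      exact mem_Ioi.2 (by positivity)
    · intro y hy
      have hy0 : (0:ℝ) < y := hy
      exact ⟨a / (b * y), mem_Ioi.2 (by positivity), by field_simp⟩
  have hφderiv : ∀ u ∈ Ioi (0:ℝ),
      HasDerivWithinAt (fun u : ℝ => a / (b * u)) (-(a / b) / u ^ 2) (Ioi 0) u := by
    intro u hu
    have hu0 : u ≠ 0 := ne_of_gt hu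
    have h1 : HasDerivAt (fun u : ℝ => a / (b * u)) (-(a / b) / u ^ 2) u := by
      have h := (hasDerivAt_inv hu0).const_mul (a / b)
      simpa [div_mul_eq_div_div, div_eq_mul_inv, mul_neg, neg_mul, mul_comm, mul_assoc, mul_left_comm] using h
    exact h1.hasDerivWithinAt
  have hφinj : InjOn (fun u : ℝ => a / (b * u)) (Ioi 0) := by
    intro p hp q hq hpq
    have hp0 : (0:ℝ) < p := hp
    have hq0 : (0:ℝ) < q := hq
    have h : a / (b * p) = a / (b * q) := hpq
    field_simp at h
    exact h.symm
  have hφg : ∀ u ∈ Ioi (0:ℝ), g (a / (b * u)) = g u := by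
    intro u hu
    have hu0 : u ≠ 0 := ne_of_gt hu
    have hb0 : b ≠ 0 := ne_of_gt hb
    have ha0 : a ≠ 0 := ne_of_gt ha
    have h1 : b * (a / (b * u)) = a / u := by field_simp
    have h2 : a / (a / (b * u)) = b * u := by
      rw [div_div_eq_mul_div]; field_simp
    have h3 : (b * (a / (b * u)) - a / (a / (b * u))) ^ 2 = (b * u - a / u) ^ 2 := by
      rw [h1, h2]; ring
    simp only [hg]
    rw [h3]
  have hφabs : ∀ u ∈ Ioi (0:ℝ), |(-(a / b) / u ^ 2)| = a / (b * u ^ 2) := by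
    intro u hu
    have hu0 : (0:ℝ) < u := hu
    have h : |(-(a / b) / u ^ 2)| = (a / b) / u ^ 2 := by
      rw [abs_div, abs_neg, abs_of_pos (by positivity : (0:ℝ) < a / b),
        abs_of_pos (by positivity : (0:ℝ) < u ^ 2)]
    rw [h, div_div]
  have hsub2 : ∫ u in Ioi (0:ℝ), g u = ∫ u in Ioi (0:ℝ), (a / (b * u ^ 2)) * g u := by
    conv_lhs => rw [← hφimg]
    rw [MeasureTheory.integral_image_eq_integral_abs_deriv_smul measurableSet_Ioi hφderiv hφinj g]
    apply setIntegral_congr_fun measurableSet_Ioi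
    intro u hu
    simp only [smul_eq_mul, hφabs u hu, hφg u hu]
  have hint2 : IntegrableOn (fun u : ℝ => (a / (b * u ^ 2)) * g u) (Ioi 0) := by
    have := (MeasureTheory.integrableOn_image_iff_integrableOn_abs_deriv_smul
      measurableSet_Ioi hφderiv hφinj g).1 (by rw [hφimg]; exact hint)
    apply this.congr_fun _ measurableSet_Ioi
    intro u hu
    simp only [smul_eq_mul, hφabs u hu, hφg u hu]
  -- the main substitution w = b u - a / u
  have himg : (fun u : ℝ => b * u - a / u) '' Ioi 0 = univ := by
    apply eq_univ_of_forall
    intro y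
    have hd : 0 < y ^ 2 + 4 * (a * b) := by positivity
    set u : ℝ := (y + Real.sqrt (y ^ 2 + 4 * (a * b))) / (2 * b) with hu
    have hs : |y| < Real.sqrt (y ^ 2 + 4 * (a * b)) := by
      rw [← Real.sqrt_sq_eq_abs]
      apply Real.sqrt_lt_sqrt (by positivity)
      nlinarith
    have hupos : 0 < u := by
      have h1 : -y < Real.sqrt (y ^ 2 + 4 * (a * b)) := lt_of_le_of_lt (neg_le_abs y) hs
      rw [hu]
      have : 0 < y + Real.sqrt (y ^ 2 + 4 * (a * b)) := by linarith
      positivity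
    refine ⟨u, hupos, ?_⟩
    have hq : b * u ^ 2 - y * u - a = 0 := by
      have hsq : Real.sqrt (y ^ 2 + 4 * (a * b)) ^ 2 = y ^ 2 + 4 * (a * b) :=
        Real.sq_sqrt hd.le
      rw [hu]
      field_simp
      nlinarith [Real.sq_sqrt (show (0:ℝ) ≤ y ^ 2 + b * 4 * a by positivity)]
    field_simp
    nlinarith
  have hderiv : ∀ u ∈ Ioi (0:ℝ),
      HasDerivWithinAt (fun u : ℝ => b * u - a / u) (b + a / u ^ 2) (Ioi 0) u := by
    intro u hu
    have hu0 : u ≠ 0 := ne_of_gt hu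
    have h1 : HasDerivAt (fun u : ℝ => b * u) b u := by
      simpa using (hasDerivAt_id u).const_mul b
    have h2 : HasDerivAt (fun u : ℝ => a / u) (-(a / u ^ 2)) u := by
      have h := (hasDerivAt_inv hu0).const_mul a
      simpa [div_eq_mul_inv, mul_neg] using h
    exact (by have h := h1.sub h2; rw [sub_neg_eq_add] at h; exact h : HasDerivAt (fun u : ℝ => b * u - a / u) _ u).hasDerivWithinAt
  have hinj : InjOn (fun u : ℝ => b * u - a / u) (Ioi 0) := by
    have : StrictMonoOn (fun u : ℝ => b * u - a / u) (Ioi 0) := by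
      intro p hp q hq hpq
      simp only
      have hp0 : (0:ℝ) < p := hp
      have hq0 : (0:ℝ) < q := hq
      have : a / q < a / p := div_lt_div_of_pos_left ha hp0 hpq
      nlinarith [mul_lt_mul_of_pos_left hpq hb]
    exact this.injOn
  have hsub1 : ∫ w : ℝ, Real.exp (-w ^ 2) =
      ∫ u in Ioi (0:ℝ), (b + a / u ^ 2) * g u := by
    have h := MeasureTheory.integral_image_eq_integral_abs_deriv_smul
      measurableSet_Ioi hderiv hinj (fun w => Real.exp (-w ^ 2))
    rw [himg] at h
    rw [← setIntegral_univ, h]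
    apply setIntegral_congr_fun measurableSet_Ioi
    intro u hu
    have hu0 : (0:ℝ) < u := hu
    have habs : |b + a / u ^ 2| = b + a / u ^ 2 := abs_of_pos (by positivity)
    simp [habs, smul_eq_mul, hg]
  -- split and solve
  have hsplit : ∫ u in Ioi (0:ℝ), (b + a / u ^ 2) * g u =
      b * (∫ u in Ioi (0:ℝ), g u) + b * (∫ u in Ioi (0:ℝ), (a / (b * u ^ 2)) * g u) := by
    have e1 : ∀ u ∈ Ioi (0:ℝ), (b + a / u ^ 2) * g u = b * g u + b * ((a / (b * u ^ 2)) * g u) := by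
      intro u hu
      have hu0 : u ≠ 0 := ne_of_gt (mem_Ioi.1 hu)
      have hb0 : b ≠ 0 := ne_of_gt hb
      field_simp
    rw [setIntegral_congr_fun measurableSet_Ioi e1]
    rw [integral_add ((hint.const_mul b)) (hint2.const_mul b), integral_const_mul,
      integral_const_mul]
  have hgauss : ∫ w : ℝ, Real.exp (-w ^ 2) = Real.sqrt π := by
    have := integral_gaussian 1
    simpa using this
  have heq : Real.sqrt π = b * (∫ u in Ioi (0:ℝ), g u) + b * (∫ u in Ioi (0:ℝ), g u) := by
    rw [← hgauss, hsub1, hsplit, ← hsub2]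
  have hb0 : (2 * b : ℝ) ≠ 0 := by positivity
  field_simp
  linarith

lemma exp_quad_integral (a b : ℝ) (ha : 0 ≤ a) (hb : 0 < b) :
    ∫ u in Ioi (0:ℝ), Real.exp (-(a ^ 2 / u ^ 2) - b ^ 2 * u ^ 2)
      = Real.sqrt π / (2 * b) * Real.exp (-(2 * (a * b))) := by
  rcases eq_or_lt_of_le ha with rfl | ha
  · have h1 : ∀ u : ℝ, Real.exp (-((0:ℝ) ^ 2 / u ^ 2) - b ^ 2 * u ^ 2)
        = Real.exp (-b ^ 2 * u ^ 2) := by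
      intro u; simp [neg_mul]
    simp only [h1]
    rw [integral_gaussian_Ioi (b ^ 2), Real.sqrt_div Real.pi_pos.le, Real.sqrt_sq hb.le]
    simp only [mul_zero, zero_mul, neg_zero, Real.exp_zero, mul_one]
    ring
  · have h1 : ∀ u ∈ Ioi (0:ℝ), Real.exp (-(a ^ 2 / u ^ 2) - b ^ 2 * u ^ 2)
        = Real.exp (-(2 * (a * b))) * Real.exp (-(b * u - a / u) ^ 2) := by
      intro u hu
      have hu0 : u ≠ 0 := ne_of_gt (mem_Ioi.1 hu)
      rw [← Real.exp_add]
      congr 1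
      field_simp
      ring
    rw [setIntegral_congr_fun measurableSet_Ioi h1, integral_const_mul,
      glasser_key a b ha hb]
    ring

/-- The Laplace distribution as an exponential scale mixture of Gaussians:
`∫₀^∞ N(x; 0, τ) · Exp(τ; λ²/2) dτ = (λ/2) exp(−λ|x|)` for `λ > 0`. -/
theorem laplace_gaussian_scale_mixture (l : ℝ) (hl : 0 < l) (x : ℝ) :
    ∫ τ in Set.Ioi (0 : ℝ),
        (1 / Real.sqrt (2 * Real.pi * τ)) * Real.exp (-x ^ 2 / (2 * τ)) *
        (l ^ 2 / 2 * Real.exp (-l ^ 2 * τ / 2))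
    = l / 2 * Real.exp (-l * |x|) := by
  have hs2 : Real.sqrt 2 * Real.sqrt 2 = 2 := Real.mul_self_sqrt (by norm_num)
  have hs2pos : (0:ℝ) < Real.sqrt 2 := Real.sqrt_pos.2 (by norm_num)
  have hsπ : (0:ℝ) < Real.sqrt π := Real.sqrt_pos.2 Real.pi_pos
  set a : ℝ := |x| / Real.sqrt 2 with hadef
  set b : ℝ := l / Real.sqrt 2 with hbdef
  have ha : 0 ≤ a := by positivity
  have hb : 0 < b := by positivity
  have himg : (fun u : ℝ => u ^ 2) '' Ioi 0 = Ioi 0 := by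
    apply Subset.antisymm
    · rintro y ⟨u, hu, rfl⟩
      have : (0:ℝ) < u := hu
      exact mem_Ioi.2 (by positivity)
    · intro y hy
      have hy0 : (0:ℝ) < y := hy
      exact ⟨Real.sqrt y, mem_Ioi.2 (Real.sqrt_pos.2 hy0), Real.sq_sqrt hy0.le⟩
  have hderiv : ∀ u ∈ Ioi (0:ℝ), HasDerivWithinAt (fun u : ℝ => u ^ 2) (2 * u) (Ioi 0) u := by
    intro u hu
    simpa using (hasDerivAt_pow 2 u).hasDerivWithinAt
  have hinj : InjOn (fun u : ℝ => u ^ 2) (Ioi 0) := by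
    intro p hp q hq hpq
    have hp0 : (0:ℝ) < p := hp
    have hq0 : (0:ℝ) < q := hq
    simp only at hpq
    nlinarith
  set F : ℝ → ℝ := fun τ => (1 / Real.sqrt (2 * Real.pi * τ)) * Real.exp (-x ^ 2 / (2 * τ)) *
        (l ^ 2 / 2 * Real.exp (-l ^ 2 * τ / 2)) with hF
  have hsub : ∫ τ in Ioi (0:ℝ), F τ =
      ∫ u in Ioi (0:ℝ), (l ^ 2 / Real.sqrt (2 * π)) *
        Real.exp (-(a ^ 2 / u ^ 2) - b ^ 2 * u ^ 2) := by
    conv_lhs => rw [← himg]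
    rw [MeasureTheory.integral_image_eq_integral_abs_deriv_smul measurableSet_Ioi hderiv hinj F]
    apply setIntegral_congr_fun measurableSet_Ioi
    intro u hu
    have hu0 : (0:ℝ) < u := hu
    have h1 : Real.sqrt (2 * π * u ^ 2) = Real.sqrt (2 * π) * u := by
      rw [Real.sqrt_mul (by positivity) (u ^ 2), Real.sqrt_sq hu0.le]
    have ha2 : a ^ 2 = x ^ 2 / 2 := by
      rw [hadef, div_pow, sq_abs]
      congr 1
      nlinarith
    have hb2 : b ^ 2 = l ^ 2 / 2 := by
      rw [hbdef, div_pow]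
      congr 1
      nlinarith
    have hexp : -(a ^ 2 / u ^ 2) - b ^ 2 * u ^ 2
        = -x ^ 2 / (2 * u ^ 2) + -l ^ 2 * u ^ 2 / 2 := by
      rw [ha2, hb2]; ring
    have hsqrt2π : (0:ℝ) < Real.sqrt (2 * π) := Real.sqrt_pos.2 (by positivity)
    simp only [smul_eq_mul, hF]
    rw [abs_of_pos (by positivity : (0:ℝ) < 2 * u), h1, hexp, Real.exp_add]
    field_simp
  rw [hsub, integral_const_mul, exp_quad_integral a b ha hb]
  have h2ab : 2 * (a * b) = l * |x| := by
    rw [hadef, hbdef]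
    field_simp
    rw [Real.sq_sqrt (by norm_num : (0:ℝ) ≤ 2)]
    ring
  have h2π' : Real.sqrt (2 * π) = Real.sqrt 2 * Real.sqrt π := Real.sqrt_mul (by norm_num) π
  rw [h2ab, hbdef, h2π']
  field_simp
end

section
/- The generalized double Pareto density arises as a Gamma mixture of Laplace distributions: for α > 0, η > 0, and all x ∈ ℝ, ∫₀^∞ (λ/2)·exp(−λ|x|) · (η^α/Γ(α))·λ^{α−1}·exp(−η λ) dλ = (1/(2ξ))·(1 + |x|/(α ξ))^{−(α+1)}, where ξ = η/α. -/
/-! Multiplying the Laplace and Gamma densities merges the exponentials, so the mixture integral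
is a Gamma integral `∫₀^∞ l^α e^{-(η+|x|) l} dl = Γ(α+1) / (η+|x|)^(α+1)`; with `Γ(α+1) = α Γ(α)`
this is `α η^α / (2 (η+|x|)^(α+1))`, which is the GDP density rewritten in terms of `η`. -/

open Real Set MeasureTheory

lemma laplace_mul_gamma_eq {α η s l : ℝ} (hl : 0 < l) :
    (l / 2 * exp (-l * s)) * (η ^ α / Gamma α * l ^ (α - 1) * exp (-η * l))
      = η ^ α / Gamma α / 2 * (l ^ ((α + 1) - 1) * exp (-((η + s) * l))) := by
  have hpow : l ^ ((α + 1) - 1) = l ^ (α - 1) * l := by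
    rw [show α + 1 - 1 = (α - 1) + 1 by ring, rpow_add hl, rpow_one]
  have hexp : exp (-((η + s) * l)) = exp (-l * s) * exp (-η * l) := by
    rw [← exp_add]; ring_nf
  rw [hpow, hexp]; ring

lemma integral_laplace_mul_gamma {α η s : ℝ} (hα : 0 < α) (hηs : 0 < η + s) :
    ∫ l in Ioi (0 : ℝ), (l / 2 * exp (-l * s)) * (η ^ α / Gamma α * l ^ (α - 1) * exp (-η * l))
      = α * η ^ α / (2 * (η + s) ^ (α + 1)) := by
  calc ∫ l in Ioi (0 : ℝ), (l / 2 * exp (-l * s)) * (η ^ α / Gamma α * l ^ (α - 1) * exp (-η * l))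
      = η ^ α / Gamma α / 2 * ∫ l in Ioi (0 : ℝ), l ^ ((α + 1) - 1) * exp (-((η + s) * l)) := by
        rw [← integral_const_mul]
        exact setIntegral_congr_fun measurableSet_Ioi fun l hl => laplace_mul_gamma_eq hl
    _ = η ^ α / Gamma α / 2 * (1 / (η + s)) ^ (α + 1) * (α * Gamma α) := by
        rw [integral_rpow_mul_exp_neg_mul_Ioi (by linarith) hηs, Gamma_add_one hα.ne', mul_assoc]
    _ = α * η ^ α / (2 * (η + s) ^ (α + 1)) := by
        rw [div_rpow zero_le_one hηs.le, one_rpow]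
        field_simp [(Gamma_pos_of_pos hα).ne']

lemma gdp_density_eq {α η s : ℝ} (hα : α ≠ 0) (hη : 0 < η) (hs : 0 ≤ s) :
    1 / (2 * (η / α)) * (1 + s / (α * (η / α))) ^ (-(α + 1))
      = α * η ^ α / (2 * (η + s) ^ (α + 1)) := by
  have hηs : 0 < η + s := by positivity
  rw [show 1 + s / (α * (η / α)) = (η + s) / η by field_simp, div_rpow hηs.le hη.le,
    rpow_neg hη.le, rpow_neg hηs.le, rpow_add hη, rpow_one]
  field_simp

/-- The generalized double Pareto density as a Gamma mixture of Laplace densities: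
`∫₀^∞ (λ/2)e^{−λ|x|} · Gamma(λ; α, η) dλ = (1/(2ξ)) (1 + |x|/(αξ))^{−(α+1)}`, `ξ = η/α`. -/
theorem gdp_gamma_mixture_of_laplace (α η : ℝ) (hα : 0 < α) (hη : 0 < η) (x : ℝ) :
    ∫ l in Set.Ioi (0 : ℝ),
        (l / 2 * Real.exp (-l * |x|)) *
        (η ^ α / Real.Gamma α * l ^ (α - 1) * Real.exp (-η * l))
    = (1 / (2 * (η / α))) * (1 + |x| / (α * (η / α))) ^ (-(α + 1)) := by
  rw [integral_laplace_mul_gamma hα (by positivity), gdp_density_eq hα.ne' hη (abs_nonneg x)]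
end
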